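/- Let f be a non-zero vector of a metric vector space (V,Q). Then for all s ∈ F with s ≠ 0 and s ≠ 1, and all non-zero a* ∈ V* with ⟨a*,f⟩ = 0, the mapping s·δ_{a*,f} ∈ GL(V) does not belong to O'(V,Q). -/

import Mathlib

/-! Setting: a field `F`, a finite-dimensional `F`-vector space `V`, a quadratic form
`Q : V → F` with polar form `B = QuadraticMap.polar Q` (the bilinear map `Q.polarBilin`),
induced map `D = Q.polarBilin : V →ₗ[F] Module.Dual F V`, and radical
`V^⊥ = LinearMap.ker Q.polarBilin`. -/

variable {F V : Type*} [Field F] [AddCommGroup V] [Module F V] [FiniteDimensional F V]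

/-- The map `δ_{c*,f} : x ↦ x + ⟨c*,x⟩ • f`. -/
def deltaMap (c : Module.Dual F V) (f : V) : V →ₗ[F] V :=
  LinearMap.id + c.smulRight f

/-- The orthogonal group `O(V,Q)`, as a set of linear endomorphisms. -/
def orthSet (Q : QuadraticForm F V) : Set (V →ₗ[F] V) :=
  {φ | Function.Bijective φ ∧ ∀ x, Q (φ x) = Q x}

/-- The weak orthogonal group `O'(V,Q)`: isometries fixing the radical elementwise. -/
def wOrthSet (Q : QuadraticForm F V) : Set (V →ₗ[F] V) :=
  {φ | Function.Bijective φ ∧ (∀ x, Q (φ x) = Q x) ∧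
    ∀ x ∈ LinearMap.ker Q.polarBilin, φ x = x}

/-- The group `Δ(V,f) = {δ_{a*,f} : a* ∈ V*, ⟨a*,f⟩ ≠ -1}`. -/
def deltaSet (f : V) : Set (V →ₗ[F] V) :=
  {φ | ∃ a : Module.Dual F V, a f ≠ -1 ∧ φ = deltaMap a f}

/-- The `Q`-reflection `ξ_r : x ↦ x - Q(r)⁻¹ • B(r,x) • r` in the direction of `r`. -/
noncomputable def xiMap (Q : QuadraticForm F V) (r : V) : V →ₗ[F] V :=
  LinearMap.id - (Q r)⁻¹ • (Q.polarBilin r).smulRight r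

/-! Suppose `φ = s • δ_{a,f}` preserves `Q`. Since `a f = 0`, `φ f = s • f`, so comparing
`Q (φ f) = Q f` and `B (φ f) (φ x) = B f x` gives `(s² - 1) Q f = 0` and
`s² (B f x + 2 a(x) Q f) = B f x`. If `s² ≠ 1` this forces `Q f = 0` and then `B f = 0`.
If `s² = 1` then `s = -1` and `2 ≠ 0`, so evaluating at `x` with `a x ≠ 0` gives `Q f = 0`;
then `Q (φ x) = Q x` reads `a(x) B f x = 0`, and a product of two linear forms vanishes
only if one of them does, so `B f = 0`. Either way `f` lies in the radical, where `φ` acts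
as `s ≠ 1`. -/

theorem Module.Dual.eq_zero_or_eq_zero_of_mul_eq_zero {R M : Type*} [CommRing R]
    [NoZeroDivisors R] [AddCommGroup M] [Module R M] {a g : Module.Dual R M}
    (h : ∀ x, a x * g x = 0) : a = 0 ∨ g = 0 := by
  by_contra! hag
  obtain ⟨x, hx⟩ := DFunLike.ne_iff.mp hag.1
  obtain ⟨y, hy⟩ := DFunLike.ne_iff.mp hag.2
  have hgx : g x = 0 := (mul_eq_zero.mp (h x)).resolve_left hx
  have hay : a y = 0 := (mul_eq_zero.mp (h y)).resolve_right hy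
  have hxy := h (x + y)
  simp only [map_add, hgx, hay, add_zero, zero_add] at hxy
  exact mul_ne_zero hx hy hxy

theorem QuadraticMap.polar_map_map_of_forall_map_eq {R M N : Type*} [CommRing R]
    [AddCommGroup M] [AddCommGroup N] [Module R M] [Module R N] {Q : QuadraticMap R M N}
    {φ : M →ₗ[R] M} (hφ : ∀ x, Q (φ x) = Q x) (x y : M) :
    polar Q (φ x) (φ y) = polar Q x y := by
  simp only [polar, ← map_add, hφ]

section

open QuadraticMap

variable {K W : Type*} [Field K] [AddCommGroup W] [Module K W]

@[simp]
theorem smul_deltaMap_apply (s : K) (a : Module.Dual K W) (f x : W) :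
    (s • deltaMap a f) x = s • (x + a x • f) :=
  rfl

variable {Q : QuadraticForm K W} {s : K} {a : Module.Dual K W} {f : W}

theorem mul_self_sub_one_mul_eq_zero_of_smul_deltaMap (haf : a f = 0)
    (hQ : ∀ x, Q ((s • deltaMap a f) x) = Q x) : (s * s - 1) * Q f = 0 := by
  have h := hQ f
  simp only [smul_deltaMap_apply, haf, zero_smul, add_zero, QuadraticMap.map_smul,
    smul_eq_mul] at h
  linear_combination h

theorem mul_self_mul_polar_of_smul_deltaMap (haf : a f = 0)
    (hQ : ∀ x, Q ((s • deltaMap a f) x) = Q x) (x : W) :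
    s * s * (polar Q f x + 2 * a x * Q f) = polar Q f x := by
  have h := polar_map_map_of_forall_map_eq hQ f x
  simp only [smul_deltaMap_apply, haf, zero_smul, add_zero, polar_smul_left, polar_smul_right,
    polar_add_right, polar_self, smul_eq_mul, nsmul_eq_mul, Nat.cast_ofNat] at h
  linear_combination h

theorem apply_mul_polar_eq_zero_of_smul_deltaMap (hs : s * s = 1) (hQf : Q f = 0)
    (hQ : ∀ x, Q ((s • deltaMap a f) x) = Q x) (x : W) : a x * polar Q f x = 0 := by
  have h := hQ x
  simp only [smul_deltaMap_apply, QuadraticMap.map_smul, QuadraticMap.map_add (⇑Q) x,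
    polar_smul_right, hQf, smul_eq_mul, hs] at h
  rw [polar_comm]
  linear_combination h

theorem polarBilin_eq_zero_of_smul_deltaMap (hs1 : s ≠ 1) (ha0 : a ≠ 0) (haf : a f = 0)
    (hQ : ∀ x, Q ((s • deltaMap a f) x) = Q x) : Q.polarBilin f = 0 := by
  have hpolar := mul_self_mul_polar_of_smul_deltaMap haf hQ
  by_cases hs : s * s = 1
  · have htwo : (2 : K) ≠ 0 := by
      have hs_neg : s = -1 := (mul_self_eq_one_iff.mp hs).resolve_left hs1
      intro h2
      exact hs1 (by linear_combination hs_neg - h2)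
    obtain ⟨x₀, hx₀⟩ : ∃ x, a x ≠ 0 := DFunLike.ne_iff.mp ha0
    have hQf : Q f = 0 := by
      have h := hpolar x₀
      rw [hs] at h
      have : 2 * a x₀ * Q f = 0 := by linear_combination h
      exact (mul_eq_zero.mp this).resolve_left (mul_ne_zero htwo hx₀)
    exact ((Module.Dual.eq_zero_or_eq_zero_of_mul_eq_zero (g := Q.polarBilin f)
      (apply_mul_polar_eq_zero_of_smul_deltaMap hs hQf hQ)).resolve_left ha0)
  · have hQf : Q f = 0 :=
      (mul_eq_zero.mp (mul_self_sub_one_mul_eq_zero_of_smul_deltaMap haf hQ)).resolve_left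
        (sub_ne_zero.mpr hs)
    ext x
    have h := hpolar x
    rw [hQf, mul_zero, add_zero] at h
    have : (s * s - 1) * polar Q f x = 0 := by linear_combination h
    simpa [sub_eq_zero, hs] using this

end

theorem stmt7 (Q : QuadraticForm F V) (f : V) (hf : f ≠ 0)
    (s : F) (hs1 : s ≠ 1)
    (a : Module.Dual F V) (ha0 : a ≠ 0) (haf : a f = 0) :
    s • deltaMap a f ∉ wOrthSet Q := by
  rintro ⟨-, hQ, hfix⟩
  have hfixf := hfix f (polarBilin_eq_zero_of_smul_deltaMap hs1 ha0 haf hQ)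
  simp only [smul_deltaMap_apply, haf, zero_smul, add_zero] at hfixf
  have : (s - 1) • f = 0 := by rw [sub_smul, one_smul, hfixf, sub_self]
  exact hf ((smul_eq_zero.mp this).resolve_left (sub_ne_zero.mpr hs1))
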